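/- Let $\Omega \subset \mathbb{R}^N$ ($N \geq 2$) be a measurable set, $0 < 2s < N$, and $1 < p < 2$. Assume the kernel $K(x,y) = |x-y|^{-(N-2s)}$ satisfies $K \in L^{p/(p-1)}(\Omega \times \Omega)$, and set $S = \|K\|_{L^{p/(p-1)}(\Omega \times \Omega)}$. Suppose $\omega \in L^{p/(2-p)}(\Omega)$ and $u \in L^{p/(p-1)}(\Omega)$, $u \not\equiv 0$, satisfies $u(x) = \int_{\Omega} \frac{\omega(y) u(y)}{|x-y|^{N-2s}}\,dy$ for a.e. $x \in \Omega$. Then $\|\omega\|_{L^{p/(2-p)}(\Omega)} \geq \frac{1}{S}$. -/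

import Mathlib

/-!
Write `q = p / (p - 1)`, `r = p / (2 - p)` and `K(x, y) = |x - y|^{-(N - 2s)}`. Hölder's
inequality in `y` with exponents `p, q` gives `|u(x)| ≤ ‖ω u‖_p ‖K(x, ·)‖_q`, and taking the
`L^q` norm in `x` gives `‖u‖_q ≤ ‖ω u‖_p ‖K‖_{L^q(Ω × Ω)}`. Hölder's inequality with
`1 / p = 1 / r + 1 / q` gives `‖ω u‖_p ≤ ‖ω‖_r ‖u‖_q`. Since `0 < ‖u‖_q < ∞`, it cancels,
leaving `1 ≤ ‖ω‖_r ‖K‖_q = ‖ω‖_r S`.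
-/

open Real MeasureTheory
open scoped ENNReal

section KernelOperators

variable {α β 𝕜 E F : Type*} [MeasurableSpace α] [MeasurableSpace β]
  {μ : Measure α} {ν : Measure β}

theorem eLpNorm_le_mul_eLpNorm_uncurry [SFinite ν] [ENorm E] [TopologicalSpace F]
    [ContinuousENorm F] {q : ℝ≥0∞} (hq0 : q ≠ 0) (hq : q ≠ ∞)
    {u : α → E} {K : α → β → F} (hK : AEStronglyMeasurable (Function.uncurry K) (μ.prod ν))
    {c : ℝ≥0∞} (hu : ∀ᵐ x ∂μ, ‖u x‖ₑ ≤ c * eLpNorm (K x) q ν) :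
    eLpNorm u q μ ≤ c * eLpNorm (Function.uncurry K) q (μ.prod ν) := by
  have ht : 0 < q.toReal := ENNReal.toReal_pos hq0 hq
  have hKt : AEMeasurable (fun z => ‖Function.uncurry K z‖ₑ ^ q.toReal) (μ.prod ν) :=
    hK.enorm.pow_const _
  simp only [eLpNorm_eq_lintegral_rpow_enorm_toReal hq0 hq] at hu ⊢
  rw [lintegral_prod _ hKt]
  calc (∫⁻ x, ‖u x‖ₑ ^ q.toReal ∂μ) ^ (1 / q.toReal)
      ≤ (∫⁻ x, c ^ q.toReal * ∫⁻ y, ‖K x y‖ₑ ^ q.toReal ∂ν ∂μ) ^ (1 / q.toReal) := by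
        gcongr ?_ ^ _
        refine lintegral_mono_ae (hu.mono fun x hx => ?_)
        calc ‖u x‖ₑ ^ q.toReal
            ≤ (c * (∫⁻ y, ‖K x y‖ₑ ^ q.toReal ∂ν) ^ (1 / q.toReal)) ^ q.toReal := by gcongr
          _ = _ := by
            rw [ENNReal.mul_rpow_of_nonneg _ _ ht.le, one_div, ENNReal.rpow_inv_rpow ht.ne']
    _ = c * (∫⁻ x, ∫⁻ y, ‖K x y‖ₑ ^ q.toReal ∂ν ∂μ) ^ (1 / q.toReal) := by
        rw [lintegral_const_mul'' (f := fun x => ∫⁻ y, ‖K x y‖ₑ ^ q.toReal ∂ν) _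
            hKt.lintegral_prod_right',
          ENNReal.mul_rpow_of_nonneg _ _ (by positivity), ← ENNReal.rpow_mul,
          mul_one_div_cancel ht.ne', ENNReal.rpow_one]

variable [NormedRing 𝕜]

theorem one_le_eLpNorm_mul_eLpNorm_uncurry_of_enorm_le_lintegral [SFinite μ]
    {p q r : ℝ≥0∞} [p.HolderConjugate q] [r.HolderTriple q p] (hq : q ≠ ∞)
    {K : α → α → 𝕜} {ω u : α → 𝕜} (hK : AEStronglyMeasurable (Function.uncurry K) (μ.prod μ))
    (hω : AEStronglyMeasurable ω μ) (hu : MemLp u q μ) (hu0 : ¬ u =ᵐ[μ] 0)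
    (h : ∀ᵐ x ∂μ, ‖u x‖ₑ ≤ ∫⁻ y, ‖K x y * (ω y * u y)‖ₑ ∂μ) :
    1 ≤ eLpNorm ω r μ * eLpNorm (Function.uncurry K) q (μ.prod μ) := by
  have hq0 : q ≠ 0 := ENNReal.HolderConjugate.ne_zero q p
  have hu_pointwise : ∀ᵐ x ∂μ, ‖u x‖ₑ ≤ eLpNorm (ω * u) p μ * eLpNorm (K x) q μ := by
    filter_upwards [h, hK.prodMk_left] with x hx hKx
    calc ‖u x‖ₑ ≤ eLpNorm (fun y => K x y * (ω * u) y) 1 μ := by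
          rwa [eLpNorm_one_eq_lintegral_enorm]
      _ ≤ eLpNorm (K x) q μ * eLpNorm (ω * u) p μ := by
          simpa using eLpNorm_le_eLpNorm_mul_eLpNorm'_of_norm (p := q) (q := p) (r := 1) hKx
            (hω.mul hu.1) (· * ·) 1 (ae_of_all _ fun y => by simpa using norm_mul_le _ _)
      _ = _ := mul_comm _ _
  have hωu : eLpNorm (ω * u) p μ ≤ eLpNorm ω r μ * eLpNorm u q μ :=
    eLpNorm_smul_le_mul_eLpNorm (f := u) (φ := ω) hu.1 hω
  have hu_ne_zero : eLpNorm u q μ ≠ 0 := by rwa [Ne, eLpNorm_eq_zero_iff hu.1 hq0]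
  rw [← ENNReal.mul_le_mul_iff_left hu_ne_zero hu.eLpNorm_ne_top, one_mul]
  calc eLpNorm u q μ ≤ eLpNorm (ω * u) p μ * eLpNorm (Function.uncurry K) q (μ.prod μ) :=
        eLpNorm_le_mul_eLpNorm_uncurry hq0 hq hK hu_pointwise
    _ ≤ eLpNorm ω r μ * eLpNorm u q μ * eLpNorm (Function.uncurry K) q (μ.prod μ) := by
        gcongr
    _ = _ := by rw [mul_right_comm]

theorem one_le_eLpNorm_abs_mul_eLpNorm_uncurry_of_eq_integral [SFinite μ]
    {p q r : ℝ≥0∞} [p.HolderConjugate q] [r.HolderTriple q p] (hq : q ≠ ∞)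
    {K : α → α → ℝ} {ω u : α → ℝ} (hK : AEStronglyMeasurable (Function.uncurry K) (μ.prod μ))
    (hω : AEStronglyMeasurable (fun x => |ω x|) μ) (hu : MemLp (fun x => |u x|) q μ)
    (hu0 : ¬ u =ᵐ[μ] 0) (heq : ∀ᵐ x ∂μ, u x = ∫ y, K x y * (ω y * u y) ∂μ) :
    1 ≤ eLpNorm (fun x => |ω x|) r μ * eLpNorm (Function.uncurry K) q (μ.prod μ) := by
  refine one_le_eLpNorm_mul_eLpNorm_uncurry_of_enorm_le_lintegral (p := p) hq hK hω hu ?_ ?_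
  · simpa only [Filter.EventuallyEq, Pi.zero_apply, abs_eq_zero] using hu0
  · filter_upwards [heq] with x hx
    calc ‖|u x|‖ₑ = ‖∫ y, K x y * (ω y * u y) ∂μ‖ₑ := by rw [← hx, enorm_abs]
      _ ≤ ∫⁻ y, ‖K x y * (ω y * u y)‖ₑ ∂μ := enorm_integral_le_lintegral_enorm _
      _ = ∫⁻ y, ‖K x y * (|ω y| * |u y|)‖ₑ ∂μ := by simp only [enorm_mul, enorm_abs]

end KernelOperators

section RealExponent

variable {α : Type*} [MeasurableSpace α] {μ : Measure α} {f : α → ℝ} {c : ℝ}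

theorem memLp_ofReal_of_integrable_rpow (hc : 0 < c) (hf0 : ∀ x, 0 ≤ f x)
    (hf : Integrable (fun x => f x ^ c) μ) : MemLp f (ENNReal.ofReal c) μ := by
  have hmeas : AEStronglyMeasurable f μ := by
    refine (hf.aemeasurable.pow_const c⁻¹).aestronglyMeasurable.congr (ae_of_all _ fun x => ?_)
    simp only [← rpow_mul (hf0 x), mul_inv_cancel₀ hc.ne', rpow_one]
  rw [← integrable_norm_rpow_iff hmeas (by simpa using hc) ENNReal.ofReal_ne_top]
  simpa [ENNReal.toReal_ofReal hc.le, abs_of_nonneg (hf0 _)] using hf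

theorem eLpNorm_ofReal_eq_integral_rpow (hc : 0 < c) (hf0 : ∀ x, 0 ≤ f x)
    (hf : MemLp f (ENNReal.ofReal c) μ) :
    eLpNorm f (ENNReal.ofReal c) μ = ENNReal.ofReal ((∫ x, f x ^ c ∂μ) ^ c⁻¹) := by
  rw [hf.eLpNorm_eq_integral_rpow_norm (by simpa using hc) ENNReal.ofReal_ne_top]
  simp [ENNReal.toReal_ofReal hc.le, abs_of_nonneg (hf0 _)]

end RealExponent

theorem lyapunov_riesz_RN_general (N : ℕ) (s p : ℝ) (hp1 : 1 < p) (hp2 : p < 2)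
    (Ω : Set (EuclideanSpace ℝ (Fin N)))
    (ω u : EuclideanSpace ℝ (Fin N) → ℝ)
    (hK : IntegrableOn
      (fun z : EuclideanSpace ℝ (Fin N) × EuclideanSpace ℝ (Fin N) =>
        (‖z.1 - z.2‖ ^ (-((N : ℝ) - 2 * s))) ^ (p / (p - 1))) (Ω ×ˢ Ω))
    (S : ℝ)
    (hS : S = (∫ z in Ω ×ˢ Ω,
        (‖z.1 - z.2‖ ^ (-((N : ℝ) - 2 * s))) ^ (p / (p - 1))) ^ ((p - 1) / p))
    (hω : IntegrableOn (fun y => |ω y| ^ (p / (2 - p))) Ω)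
    (hu : IntegrableOn (fun y => |u y| ^ (p / (p - 1))) Ω)
    (hu0 : ¬ u =ᵐ[volume.restrict Ω] 0)
    (heq : ∀ᵐ x ∂volume.restrict Ω,
      u x = ∫ y in Ω, ω y * u y / ‖x - y‖ ^ ((N : ℝ) - 2 * s)) :
    (∫ y in Ω, |ω y| ^ (p / (2 - p))) ^ ((2 - p) / p) ≥ 1 / S := by
  set K : EuclideanSpace ℝ (Fin N) → EuclideanSpace ℝ (Fin N) → ℝ :=
    fun x y => ‖x - y‖ ^ (-((N : ℝ) - 2 * s)) with hK_def
  have hK0 : ∀ z, 0 ≤ Function.uncurry K z := fun z => rpow_nonneg (norm_nonneg _) _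
  have hq : 0 < p / (p - 1) := div_pos (by linarith) (by linarith)
  have hr : 0 < p / (2 - p) := div_pos (by linarith) (by linarith)
  have : (ENNReal.ofReal p).HolderConjugate (ENNReal.ofReal (p / (p - 1))) :=
    (Real.HolderConjugate.conjExponent hp1).ennrealOfReal
  have : (ENNReal.ofReal (p / (2 - p))).HolderTriple (ENNReal.ofReal (p / (p - 1)))
      (ENNReal.ofReal p) := Real.HolderTriple.ennrealOfReal ⟨by field_simp; ring, hr, hq⟩
  have hvol : (volume.restrict Ω).prod (volume.restrict Ω) = volume.restrict (Ω ×ˢ Ω) := by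
    rw [Measure.prod_restrict, ← Measure.volume_eq_prod]
  have hu' := memLp_ofReal_of_integrable_rpow hq (fun x => abs_nonneg (u x)) hu
  have hω' := memLp_ofReal_of_integrable_rpow hr (fun x => abs_nonneg (ω x)) hω
  have hK' := memLp_ofReal_of_integrable_rpow hq hK0 hK
  have heq' : ∀ᵐ x ∂volume.restrict Ω, u x = ∫ y in Ω, K x y * (ω y * u y) := by
    filter_upwards [heq] with x hx
    rw [hx]
    refine integral_congr_ae (ae_of_all _ fun y => ?_)
    simp only [hK_def, rpow_neg (norm_nonneg _)]
    ring
  have key := one_le_eLpNorm_abs_mul_eLpNorm_uncurry_of_eq_integral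
    (p := ENNReal.ofReal p) (r := ENNReal.ofReal (p / (2 - p))) ENNReal.ofReal_ne_top
    (hvol ▸ hK'.1) hω'.1 hu' hu0 heq'
  rw [hvol, eLpNorm_ofReal_eq_integral_rpow hr (fun x => abs_nonneg (ω x)) hω',
    eLpNorm_ofReal_eq_integral_rpow hq hK0 hK', ← ENNReal.ofReal_mul (by positivity),
    ENNReal.one_le_ofReal, inv_div, inv_div] at key
  have hS_pos : 0 < S := hS ▸ pos_of_mul_pos_right (one_pos.trans_le key) (by positivity)
  rw [ge_iff_le, div_le_iff₀ hS_pos, hS]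
  exact key

theorem lyapunov_riesz_RN (N : ℕ) (hN : 2 ≤ N) (s p : ℝ)
    (hs : 0 < 2 * s) (hsN : 2 * s < N) (hp1 : 1 < p) (hp2 : p < 2)
    (Ω : Set (EuclideanSpace ℝ (Fin N))) (hΩ : MeasurableSet Ω)
    (ω u : EuclideanSpace ℝ (Fin N) → ℝ)
    (hK : IntegrableOn
      (fun z : EuclideanSpace ℝ (Fin N) × EuclideanSpace ℝ (Fin N) =>
        (‖z.1 - z.2‖ ^ (-((N : ℝ) - 2 * s))) ^ (p / (p - 1))) (Ω ×ˢ Ω))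
    (S : ℝ)
    (hS : S = (∫ z in Ω ×ˢ Ω,
        (‖z.1 - z.2‖ ^ (-((N : ℝ) - 2 * s))) ^ (p / (p - 1))) ^ ((p - 1) / p))
    (hω : IntegrableOn (fun y => |ω y| ^ (p / (2 - p))) Ω)
    (hu : IntegrableOn (fun y => |u y| ^ (p / (p - 1))) Ω)
    (hu0 : ¬ u =ᵐ[volume.restrict Ω] 0)
    (heq : ∀ᵐ x ∂volume.restrict Ω,
      u x = ∫ y in Ω, ω y * u y / ‖x - y‖ ^ ((N : ℝ) - 2 * s)) :
    (∫ y in Ω, |ω y| ^ (p / (2 - p))) ^ ((2 - p) / p) ≥ 1 / S :=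
  lyapunov_riesz_RN_general N s p hp1 hp2 Ω ω u hK S hS hω hu hu0 heq
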